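/- arXiv:2110.01999 — 2 statements merged into one kernel-verified Lean document; each statement's English description precedes it below -/
import Mathlib

section
/- (Lemma 1, first part) With the setup of client risks r_K(h,k) = ∑_a P(a,k) r_A(h,a), if (h*, λ*) is a saddle/optimal pair for min_h max_{λ∈Δ^{|K|-1}} ∑_k λ_k r_K(h,k), i.e. λ* attains the inner sup at h* and h* attains the outer inf, then (h*, Pλ*) is an optimal pair for min_h max_{μ ∈ P·Δ^{|K|-1}} ∑_a μ_a r_A(h,a). -/
theorem stmt5 {H A K : Type*} [Nonempty H] [Fintype A] [Fintype K]
    [Nonempty A] [Nonempty K]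
    (P : A → K → ℝ) (hP : ∀ a k, 0 ≤ P a k) (hcol : ∀ k, ∑ a, P a k = 1)
    (rA : H → A → ℝ) (rK : H → K → ℝ)
    (hrK : ∀ h k, rK h k = ∑ a, P a k * rA h a)
    (hstar : H) (lstar : K → ℝ) (hl : lstar ∈ stdSimplex ℝ K)
    -- λ* attains the inner sup at h*
    (hattain : ∑ k, lstar k * rK hstar k =
      sSup {x : ℝ | ∃ l ∈ stdSimplex ℝ K, x = ∑ k, l k * rK hstar k})
    -- h* attains the outer inf
    (hmin : ∀ h : H,
      sSup {x : ℝ | ∃ l ∈ stdSimplex ℝ K, x = ∑ k, l k * rK hstar k} ≤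
      sSup {x : ℝ | ∃ l ∈ stdSimplex ℝ K, x = ∑ k, l k * rK h k}) :
    (fun a => ∑ k, P a k * lstar k) ∈
        {μ : A → ℝ | ∃ l ∈ stdSimplex ℝ K, ∀ a, μ a = ∑ k, P a k * l k} ∧
    (∑ a, (∑ k, P a k * lstar k) * rA hstar a =
      sSup {x : ℝ | ∃ μ ∈ {μ : A → ℝ | ∃ l ∈ stdSimplex ℝ K,
          ∀ a, μ a = ∑ k, P a k * l k}, x = ∑ a, μ a * rA hstar a}) ∧
    (∀ h : H,
      sSup {x : ℝ | ∃ μ ∈ {μ : A → ℝ | ∃ l ∈ stdSimplex ℝ K,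
          ∀ a, μ a = ∑ k, P a k * l k}, x = ∑ a, μ a * rA hstar a} ≤
      sSup {x : ℝ | ∃ μ ∈ {μ : A → ℝ | ∃ l ∈ stdSimplex ℝ K,
          ∀ a, μ a = ∑ k, P a k * l k}, x = ∑ a, μ a * rA h a}) := by
  have sumid : ∀ (h : H) (l : K → ℝ),
      ∑ a, (∑ k, P a k * l k) * rA h a = ∑ k, l k * rK h k := by
    intro h l
    simp only [hrK, Finset.sum_mul, Finset.mul_sum]
    rw [Finset.sum_comm]
    apply Finset.sum_congr rfl; intro k _
    apply Finset.sum_congr rfl; intro a _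
    ring
  have key : ∀ h : H,
      {x : ℝ | ∃ μ ∈ {μ : A → ℝ | ∃ l ∈ stdSimplex ℝ K,
          ∀ a, μ a = ∑ k, P a k * l k}, x = ∑ a, μ a * rA h a} =
      {x : ℝ | ∃ l ∈ stdSimplex ℝ K, x = ∑ k, l k * rK h k} := by
    intro h
    ext x
    constructor
    · rintro ⟨μ, ⟨l, hlm, hμ⟩, rfl⟩
      refine ⟨l, hlm, ?_⟩
      rw [show (∑ a, μ a * rA h a) = ∑ a, (∑ k, P a k * l k) * rA h a from
        Finset.sum_congr rfl fun a _ => by rw [hμ a], sumid]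
    · rintro ⟨l, hlm, rfl⟩
      exact ⟨fun a => ∑ k, P a k * l k, ⟨l, hlm, fun a => rfl⟩, (sumid h l).symm⟩
  refine ⟨⟨lstar, hl, fun a => rfl⟩, ?_, ?_⟩
  · rw [sumid, key, hattain]
  · intro h
    rw [key, key]
    exact hmin h
end

section
/- (Lemma 2, induction) Under the hypotheses of the one-step equivalence, if the federated algorithm and the centralized algorithm start from the same initialization θ⁰ and μ⁰ and use identical learning rates η_θ, η_μ and the same projection-gradient-ascent adversary update (which depends only on μ^{t−1} and the group risks r̂_a(θ^{t−1})), then for every round t the federated iterates (θ^t, μ^t) equal the centralized iterates (θ^t, μ^t); in particular the averaged outputs (1/T)∑_{t=1}^T θ^t coincide. -/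
open InnerProductSpace

lemma grad_sum_aux {d : ℕ} {ι : Type*} [Fintype ι]
    (f : ι → EuclideanSpace ℝ (Fin d) → ℝ) (hf : ∀ i, Differentiable ℝ (f i))
    (c : ι → ℝ) (x : EuclideanSpace ℝ (Fin d)) :
    gradient (fun y => ∑ i, c i * f i y) x = ∑ i, c i • gradient (f i) x := by
  unfold gradient
  have h1 : fderiv ℝ (fun y => ∑ i, c i * f i y) x
      = ∑ i, c i • fderiv ℝ (f i) x := by
    rw [fderiv_fun_sum (fun i _ => ((hf i) x).const_mul (c i))]
    exact Finset.sum_congr rfl fun i _ => fderiv_const_mul ((hf i) x) (c i)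
  rw [h1, map_sum]
  exact Finset.sum_congr rfl fun i _ => by rw [map_smul]

lemma grad_sum_aux2 {d : ℕ} {A K : Type*} [Fintype A] [Fintype K]
    (f : A → K → EuclideanSpace ℝ (Fin d) → ℝ) (hf : ∀ a k, Differentiable ℝ (f a k))
    (c : A → K → ℝ) (x : EuclideanSpace ℝ (Fin d)) :
    gradient (fun y => ∑ a, ∑ k, c a k * f a k y) x
      = ∑ a, ∑ k, c a k • gradient (f a k) x := by
  have := grad_sum_aux (ι := A × K) (fun p y => f p.1 p.2 y)
    (fun p => hf p.1 p.2) (fun p => c p.1 p.2) x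
  simpa [Fintype.sum_prod_type] using this

theorem stmt11 {A K : Type*} [Fintype A] [Fintype K] [Nonempty A] [Nonempty K]
    {d : ℕ}
    (nak : A → K → ℝ) (hnn : ∀ a k, 0 ≤ nak a k)
    (nk : K → ℝ) (hnk : ∀ k, nk k = ∑ a, nak a k) (hnkpos : ∀ k, 0 < nk k)
    (na : A → ℝ) (hna : ∀ a, na a = ∑ k, nak a k) (hnapos : ∀ a, 0 < na a)
    (n : ℝ) (hn : n = ∑ a, ∑ k, nak a k)
    (r : A → K → EuclideanSpace ℝ (Fin d) → ℝ)
    (hdiff : ∀ a k, Differentiable ℝ (r a k))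
    (ηθ ημ : ℝ) (hηθ : 0 < ηθ) (hημ : 0 < ημ)
    (proj : (A → ℝ) → (A → ℝ))  -- fixed projection / adversary map
    (θfed θcen : ℕ → EuclideanSpace ℝ (Fin d))
    (μfed μcen : ℕ → (A → ℝ))
    (hinitθ : θfed 0 = θcen 0) (hinitμ : μfed 0 = μcen 0)
    -- federated model update: local full-batch step then weighted aggregation
    (hfedθ : ∀ t, θfed (t + 1) = ∑ k, (nk k / n) •
      (θfed t - ηθ • gradient
        (fun x => ∑ a, (nak a k / nk k) * (μfed t a / (na a / n)) * r a k x)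
        (θfed t)))
    -- federated adversary update
    (hfedμ : ∀ t, μfed (t + 1) =
      proj (fun a => μfed t a + ημ * ∑ k, (nak a k / na a) * r a k (θfed t)))
    -- centralized model update on the weighted group risk
    (hcenθ : ∀ t, θcen (t + 1) = θcen t - ηθ • gradient
      (fun x => ∑ a, μcen t a * ∑ k, (nak a k / na a) * r a k x) (θcen t))
    -- centralized adversary update
    (hcenμ : ∀ t, μcen (t + 1) =
      proj (fun a => μcen t a + ημ * ∑ k, (nak a k / na a) * r a k (θcen t))) :
    (∀ t, θfed t = θcen t ∧ μfed t = μcen t) ∧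
    ∀ T : ℕ, (1 / (T : ℝ)) • ∑ t ∈ Finset.range T, θfed (t + 1) =
      (1 / (T : ℝ)) • ∑ t ∈ Finset.range T, θcen (t + 1) := by
  have hn0 : n ≠ 0 := by
    have : 0 < n := by
      rw [hn]
      have : ∀ a, 0 < ∑ k, nak a k := fun a => (hna a) ▸ hnapos a
      exact Finset.sum_pos (fun a _ => this a) Finset.univ_nonempty
    linarith
  have hksum : ∑ k, nk k = n := by
    rw [hn, Finset.sum_comm]
    exact Finset.sum_congr rfl fun k _ => hnk k
  have key : ∀ t, θfed t = θcen t ∧ μfed t = μcen t := by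
    intro t
    induction t with
    | zero => exact ⟨hinitθ, hinitμ⟩
    | succ t ih =>
      obtain ⟨hθ, hμ⟩ := ih
      refine ⟨?_, by rw [hfedμ, hcenμ, hθ, hμ]⟩
      rw [hfedθ, hcenθ, hθ, hμ]
      set θ := θcen t with hθdef
      set μ := μcen t with hμdef
      have hL : ∀ k, gradient
          (fun x => ∑ a, (nak a k / nk k) * (μ a / (na a / n)) * r a k x) θ
          = ∑ a, ((nak a k / nk k) * (μ a / (na a / n))) • gradient (r a k) θ := by
        intro k
        have := grad_sum_aux (fun a => r a k) (fun a => hdiff a k)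
          (fun a => (nak a k / nk k) * (μ a / (na a / n))) θ
        simpa [mul_assoc] using this
      have hR : gradient
          (fun x => ∑ a, μ a * ∑ k, (nak a k / na a) * r a k x) θ
          = ∑ a, ∑ k, (μ a * (nak a k / na a)) • gradient (r a k) θ := by
        have hfun : (fun x => ∑ a, μ a * ∑ k, (nak a k / na a) * r a k x)
            = fun x => ∑ a, ∑ k, (μ a * (nak a k / na a)) * r a k x := by
          funext x
          exact Finset.sum_congr rfl fun a _ => by
            rw [Finset.mul_sum]; exact Finset.sum_congr rfl fun k _ => by ring
        rw [hfun]
        exact grad_sum_aux2 r hdiff _ θ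
      simp only [hL, hR]
      rw [show (∑ k, (nk k / n) •
            (θ - ηθ • ∑ a, ((nak a k / nk k) * (μ a / (na a / n))) • gradient (r a k) θ))
          = (∑ k, (nk k / n)) • θ -
            ∑ k, (nk k / n) • ηθ • ∑ a, ((nak a k / nk k) * (μ a / (na a / n))) • gradient (r a k) θ
          from by rw [Finset.sum_smul]; rw [← Finset.sum_sub_distrib]; simp [smul_sub]]
      rw [← Finset.sum_div, hksum, div_self hn0, one_smul]
      congr 1
      simp only [Finset.smul_sum, smul_smul]
      rw [Finset.sum_comm]
      refine Finset.sum_congr rfl fun a _ => Finset.sum_congr rfl fun k _ => ?_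
      congr 1
      have h1 : nk k ≠ 0 := ne_of_gt (hnkpos k)
      have h2 : na a ≠ 0 := ne_of_gt (hnapos a)
      field_simp
  refine ⟨key, fun T => ?_⟩
  congr 1
  exact Finset.sum_congr rfl fun t _ => (key (t + 1)).1
end
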